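/- arXiv:1811.01007 — 6 statements merged into one kernel-verified Lean document; each statement's English description precedes it below -/
import Mathlib

section
/- Let q₁, q₂, q₃, q₄ be rational numbers and let M be a 2×2 integer matrix with determinant 1 such that q₁ = M₁₁·q₃ + M₁₂·q₄ and q₂ = M₂₁·q₃ + M₂₂·q₄. If lcm(den(q₁), den(q₂)) = lcm(den(q₃), den(q₄)), then gcd(num(q₁), num(q₂)) = gcd(num(q₃), num(q₄)). -/
/-!
Clearing denominators with `L = lcm(den q, den r)` turns a pair of rationals `(q, r)` into a pair
of integers `(L q, L r)` whose gcd is still `gcd(num q, num r)`: writing `g = gcd(den q, den r)`,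
the integers are `num q · (den r / g)` and `num r · (den q / g)`, and each cofactor is coprime to
the other numerator and to the other cofactor. Since the two pairs share `L`, the matrix `M`
relates the integer pairs as well, and an integer matrix of determinant one preserves the gcd of
a pair because its inverse is again integral.
-/

theorem Int.gcd_dvd_gcd_linear_comb (a b c d x y : ℤ) :
    Int.gcd x y ∣ Int.gcd (a * x + b * y) (c * x + d * y) :=
  Int.natCast_dvd_natCast.mp <| Int.dvd_coe_gcd
    ((Int.gcd_dvd_left x y).linear_comb (Int.gcd_dvd_right x y) a b)
    ((Int.gcd_dvd_left x y).linear_comb (Int.gcd_dvd_right x y) c d)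

theorem Int.gcd_linear_comb_eq_of_det_eq_one (M : Matrix (Fin 2) (Fin 2) ℤ) (hM : M.det = 1)
    (x y : ℤ) : Int.gcd (M 0 0 * x + M 0 1 * y) (M 1 0 * x + M 1 1 * y) = Int.gcd x y := by
  rw [Matrix.det_fin_two] at hM
  refine Nat.dvd_antisymm ?_ (Int.gcd_dvd_gcd_linear_comb ..)
  convert Int.gcd_dvd_gcd_linear_comb (M 1 1) (-M 0 1) (-M 1 0) (M 0 0)
    (M 0 0 * x + M 0 1 * y) (M 1 0 * x + M 1 1 * y) using 2
  · linear_combination (-x) * hM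
  · linear_combination (-y) * hM

theorem Nat.gcd_mul_mul_eq_of_coprime {a b e₁ e₂ : ℕ} (h₁ : a.Coprime e₁) (h₂ : b.Coprime e₂)
    (he : e₁.Coprime e₂) : Nat.gcd (a * e₂) (b * e₁) = Nat.gcd a b := by
  rw [Nat.Coprime.gcd_mul_right_cancel a (h₂.symm.mul_right he.symm),
    Nat.Coprime.gcd_mul_right_cancel_right b h₁.symm]

theorem Rat.lcm_den_mul_eq (q r : ℚ) :
    (Nat.lcm q.den r.den : ℚ) * q = (q.num * (r.den / Nat.gcd q.den r.den : ℕ) : ℤ) := by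
  rw [Nat.lcm_eq_mul_div, Nat.mul_div_assoc _ (Nat.gcd_dvd_right _ _), Nat.cast_mul, Int.cast_mul, Int.cast_natCast, ← Rat.mul_den_eq_num]
  ring

theorem Rat.exists_lcm_den_mul_gcd_eq (q r : ℚ) :
    ∃ a b : ℤ, (a : ℚ) = Nat.lcm q.den r.den * q ∧ (b : ℚ) = Nat.lcm q.den r.den * r ∧
      Int.gcd a b = Int.gcd q.num r.num := by
  refine ⟨_, r.num * (q.den / Nat.gcd q.den r.den : ℕ), (Rat.lcm_den_mul_eq q r).symm,
    by rw [Nat.lcm_comm, Rat.lcm_den_mul_eq, Nat.gcd_comm], ?_⟩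
  simp only [Int.gcd_eq_natAbs, Int.natAbs_mul, Int.natAbs_natCast]
  exact Nat.gcd_mul_mul_eq_of_coprime
    (q.reduced.coprime_dvd_right (Nat.div_dvd_of_dvd (Nat.gcd_dvd_left _ _)))
    (r.reduced.coprime_dvd_right (Nat.div_dvd_of_dvd (Nat.gcd_dvd_right _ _)))
    (Nat.coprime_div_gcd_div_gcd (Nat.gcd_pos_of_pos_left _ q.pos))

/-- If two pairs of rationals are related by an `SL(2,ℤ)` matrix and the lcm's of their
denominators agree, then the gcd's of their numerators agree. -/
theorem gcd_num_eq_of_SL2 (q₁ q₂ q₃ q₄ : ℚ) (M : Matrix (Fin 2) (Fin 2) ℤ)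
    (hdet : M.det = 1)
    (h₁ : q₁ = (M 0 0 : ℚ) * q₃ + (M 0 1 : ℚ) * q₄)
    (h₂ : q₂ = (M 1 0 : ℚ) * q₃ + (M 1 1 : ℚ) * q₄)
    (hlcm : Nat.lcm q₁.den q₂.den = Nat.lcm q₃.den q₄.den) :
    Int.gcd q₁.num q₂.num = Int.gcd q₃.num q₄.num := by
  obtain ⟨a, b, ha, hb, hab⟩ := Rat.exists_lcm_den_mul_gcd_eq q₁ q₂
  obtain ⟨c, d, hc, hd, hcd⟩ := Rat.exists_lcm_den_mul_gcd_eq q₃ q₄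
  have hac : a = M 0 0 * c + M 0 1 * d := by
    have : (a : ℚ) = M 0 0 * c + M 0 1 * d := by
      rw [ha, hc, hd, hlcm]
      linear_combination (Nat.lcm q₃.den q₄.den : ℚ) * h₁
    exact_mod_cast this
  have hbd : b = M 1 0 * c + M 1 1 * d := by
    have : (b : ℚ) = M 1 0 * c + M 1 1 * d := by
      rw [hb, hc, hd, hlcm]
      linear_combination (Nat.lcm q₃.den q₄.den : ℚ) * h₂
    exact_mod_cast this
  rw [← hab, ← hcd, hac, hbd, Int.gcd_linear_comb_eq_of_det_eq_one M hdet]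
end

section
/- For every k = 0, …, e−1 one has d_•^{(k)}(1) = d_•^{(k)}(2); consequently, defining d^{(k)}(i) = ∏_{l=k}^{e−1} d_•^{(l)}(i) (the degree of the k-th derived surface), also d^{(k)}(1) = d^{(k)}(2) for every k = 0, …, e−1. -/
/-- The data of a reduced irreducible quasi-ordinary prototype surface branch
`ζ = Σ_{j=1}^e x₁^{λ_{1,j}} x₂^{λ_{2,j}}` together with, for each choice `i ∈ {1,2}`
of the recursion, the derived exponent sequences `λ^{(k)}_{u,j}(i)`, the lowest-terms
representations `λ^{(k)}_{u,1}(i) = n_u^{(k)}(i) / m_u^{(k)}(i)` of the leading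
exponents, and the minimal nonnegative integers `r_i^{(k)}, s_i^{(k)}` with
`m_ĩ^{(k)}(i)·s_i^{(k)} − n_ĩ^{(k)}(i)·r_i^{(k)} = 1`.

The `Bool` index `false` corresponds to the index `1` of the paper and `true` to `2`;
for an index `i`, the other index `ĩ` is `!i`. -/
structure QOData where
  /-- the number `e ≥ 1` of characteristic terms -/
  e : ℕ
  he : 1 ≤ e
  /-- the characteristic exponents `λ_{u,j}` for `u ∈ {1,2}`, `j = 1,…,e` -/
  lam0 : Bool → ℕ → ℚ
  /-- the derived exponents `λ^{(k)}_{u,j}(i)`; the arguments are, in order, `i u k j`,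
  with `k = 0,…,e−1` and `j = 1,…,e−k` -/
  lam : Bool → Bool → ℕ → ℕ → ℚ
  /-- the numerators `n_u^{(k)}(i)`; the arguments are, in order, `i u k` -/
  n : Bool → Bool → ℕ → ℤ
  /-- the denominators `m_u^{(k)}(i) ≥ 1`; the arguments are, in order, `i u k` -/
  m : Bool → Bool → ℕ → ℕ
  /-- `r_i^{(k)}`; the arguments are, in order, `i k` -/
  r : Bool → ℕ → ℕ
  /-- `s_i^{(k)}`; the arguments are, in order, `i k` -/
  s : Bool → ℕ → ℕ
  /-- the leading exponents are positive -/
  pos : ∀ u, 0 < lam0 u 1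
  /-- the exponents are nondecreasing in `j` -/
  mono : ∀ u j, 1 ≤ j → j < e → lam0 u j ≤ lam0 u (j + 1)
  /-- each characteristic pair is essential: it does not lie in the subgroup of `ℚ²`
  generated by `ℤ²` together with the earlier pairs -/
  essential : ∀ j, 1 ≤ j → j ≤ e →
    (lam0 false j, lam0 true j) ∉
      AddSubgroup.closure
        ((Set.range fun p : ℤ × ℤ => ((p.1 : ℚ), (p.2 : ℚ))) ∪
          {q : ℚ × ℚ | ∃ l, 1 ≤ l ∧ l < j ∧ q = (lam0 false l, lam0 true l)})
  /-- `λ^{(0)}_{u,j}(i) = λ_{u,j}` -/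
  base : ∀ i u j, lam i u 0 j = lam0 u j
  /-- the denominators are at least 1 -/
  m_pos : ∀ i u k, k ≤ e - 1 → 1 ≤ m i u k
  /-- the leading exponents are written in lowest terms -/
  cop : ∀ i u k, k ≤ e - 1 → Int.gcd (n i u k) (m i u k : ℤ) = 1
  /-- `λ^{(k)}_{u,1}(i) = n_u^{(k)}(i) / m_u^{(k)}(i)` -/
  lead : ∀ i u k, k ≤ e - 1 → lam i u k 1 = (n i u k : ℚ) / (m i u k : ℚ)
  /-- `m_ĩ^{(k)}(i)·s_i^{(k)} − n_ĩ^{(k)}(i)·r_i^{(k)} = 1` -/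
  rs_det : ∀ i k, k ≤ e - 1 →
    (m i (!i) k : ℤ) * (s i k : ℤ) - n i (!i) k * (r i k : ℤ) = 1
  /-- `r_i^{(k)}` and `s_i^{(k)}` are the smallest nonnegative integers satisfying
  the determinant condition -/
  rs_min : ∀ i k, k ≤ e - 1 → ∀ r' s' : ℕ,
    (m i (!i) k : ℤ) * (s' : ℤ) - n i (!i) k * (r' : ℤ) = 1 → r i k ≤ r' ∧ s i k ≤ s'
  /-- the recursion for `λ^{(k+1)}_{ĩ,j}(i)`, where `d_•^{(k)}(i) = lcm(m₁^{(k)}(i), m₂^{(k)}(i))` -/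
  rec_other : ∀ i k j, k + 1 ≤ e - 1 → 1 ≤ j → j ≤ e - (k + 1) →
    lam i (!i) (k + 1) j =
      (m i (!i) k : ℚ) *
        (lam i (!i) k (j + 1) - lam i (!i) k 1 +
          (Nat.lcm (m i false k) (m i true k) : ℚ) * lam i (!i) k 1)
  /-- the recursion for `λ^{(k+1)}_{i,j}(i)`, where
  `b_i^{(k)} = d_•^{(k)}(i) / m_ĩ^{(k)}(i)` -/
  rec_self : ∀ i k j, k + 1 ≤ e - 1 → 1 ≤ j → j ≤ e - (k + 1) →
    lam i i (k + 1) j =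
      ((Nat.lcm (m i false k) (m i true k) / m i (!i) k : ℕ) : ℚ) *
        (lam i i k (j + 1) - lam i i k 1 +
          (Nat.lcm (m i false k) (m i true k) : ℚ) * lam i i k 1) +
      ((Nat.lcm (m i false k) (m i true k) / m i (!i) k : ℕ) : ℚ) * (r i k : ℚ) *
        lam i i k 1 * lam i (!i) (k + 1) j

namespace QOData

variable (D : QOData)

/-- `d_•^{(k)}(i) = lcm(m₁^{(k)}(i), m₂^{(k)}(i))` -/
def dd (i : Bool) (k : ℕ) : ℕ := Nat.lcm (D.m i false k) (D.m i true k)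

/-- `b_i^{(k)} = d_•^{(k)}(i) / m_ĩ^{(k)}(i)` -/
def b (i : Bool) (k : ℕ) : ℕ := D.dd i k / D.m i (!i) k

/-- `c_•^{(k)}(i) = gcd(n₁^{(k)}(i), n₂^{(k)}(i))` -/
def c (i : Bool) (k : ℕ) : ℕ := Int.gcd (D.n i false k) (D.n i true k)

/-- `d^{(k)}(i) = ∏_{l=k}^{e−1} d_•^{(l)}(i)`, the degree of the `k`-th derived surface -/
def dTot (i : Bool) (k : ℕ) : ℕ := ∏ l ∈ Finset.Ico k D.e, D.dd i l

end QOData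


private lemma den_dvd_aux (c : ℤ) (q : ℕ) (hcop : Int.gcd c (q:ℤ) = 1)
    (N : ℤ) (d : ℕ) (hQ : (c:ℚ) * (d:ℚ) = (q:ℚ) * (N:ℚ)) : q ∣ d := by
  have hZ : (c:ℤ) * (d:ℤ) = (q:ℤ) * N := by exact_mod_cast hQ
  have h1 : (q:ℤ) ∣ c * (d:ℤ) := ⟨N, hZ⟩
  have h2 : (q:ℤ) ∣ (d:ℤ) :=
    Int.dvd_of_dvd_mul_right_of_gcd_one h1 (by rw [Int.gcd_comm]; exact hcop)
  exact_mod_cast h2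

private lemma lcm_eq_core (p1 p2 q1 q2 : ℕ) (a1 a2 c1 c2 al be ga de : ℤ)
    (hp1 : 0 < p1) (hp2 : 0 < p2) (hq1 : 0 < q1) (hq2 : 0 < q2)
    (hca1 : Int.gcd a1 (p1:ℤ) = 1) (hca2 : Int.gcd a2 (p2:ℤ) = 1)
    (hcc1 : Int.gcd c1 (q1:ℤ) = 1) (hcc2 : Int.gcd c2 (q2:ℤ) = 1)
    (L1 L2 M1 M2 : ℚ)
    (hL1 : (p1:ℚ) * L1 = (a1:ℚ)) (hL2 : (p2:ℚ) * L2 = (a2:ℚ))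
    (hM1 : (q1:ℚ) * M1 = (c1:ℚ)) (hM2 : (q2:ℚ) * M2 = (c2:ℚ))
    (hU1 : M1 = (al:ℚ) * L1 + (be:ℚ) * L2) (hU2 : M2 = (ga:ℚ) * L1 + (de:ℚ) * L2)
    (hdet : al * de - be * ga = 1) :
    Nat.lcm p1 p2 = Nat.lcm q1 q2 := by
  set d : ℕ := Nat.lcm p1 p2 with hdDef
  set d' : ℕ := Nat.lcm q1 q2 with hd'Def
  have hD1n : d / p1 * p1 = d := Nat.div_mul_cancel (Nat.dvd_lcm_left p1 p2)
  have hD2n : d / p2 * p2 = d := Nat.div_mul_cancel (Nat.dvd_lcm_right p1 p2)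
  have hE1n : d' / q1 * q1 = d' := Nat.div_mul_cancel (Nat.dvd_lcm_left q1 q2)
  have hE2n : d' / q2 * q2 = d' := Nat.div_mul_cancel (Nat.dvd_lcm_right q1 q2)
  set D1 : ℕ := d / p1
  set D2 : ℕ := d / p2
  set E1 : ℕ := d' / q1
  set E2 : ℕ := d' / q2
  have hD1Q : (D1:ℚ) * (p1:ℚ) = (d:ℚ) := by exact_mod_cast hD1n
  have hD2Q : (D2:ℚ) * (p2:ℚ) = (d:ℚ) := by exact_mod_cast hD2n
  have hE1Q : (E1:ℚ) * (q1:ℚ) = (d':ℚ) := by exact_mod_cast hE1n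
  have hE2Q : (E2:ℚ) * (q2:ℚ) = (d':ℚ) := by exact_mod_cast hE2n
  have hdetQ : (al:ℚ) * (de:ℚ) - (be:ℚ) * (ga:ℚ) = 1 := by exact_mod_cast hdet
  have hdc1 : (c1:ℚ) * (d:ℚ) = (q1:ℚ) * ((al:ℚ) * a1 * D1 + (be:ℚ) * a2 * D2) := by
    linear_combination (-(d:ℚ)) * hM1 + (q1:ℚ) * (d:ℚ) * hU1 - (q1:ℚ) * al * L1 * hD1Q +
      (q1:ℚ) * al * D1 * hL1 - (q1:ℚ) * be * L2 * hD2Q + (q1:ℚ) * be * D2 * hL2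
  have hdc2 : (c2:ℚ) * (d:ℚ) = (q2:ℚ) * ((ga:ℚ) * a1 * D1 + (de:ℚ) * a2 * D2) := by
    linear_combination (-(d:ℚ)) * hM2 + (q2:ℚ) * (d:ℚ) * hU2 - (q2:ℚ) * ga * L1 * hD1Q +
      (q2:ℚ) * ga * D1 * hL1 - (q2:ℚ) * de * L2 * hD2Q + (q2:ℚ) * de * D2 * hL2
  have hq1d : q1 ∣ d := den_dvd_aux c1 q1 hcc1 (al * a1 * (D1:ℤ) + be * a2 * (D2:ℤ)) d
    (by push_cast; linear_combination hdc1)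
  have hq2d : q2 ∣ d := den_dvd_aux c2 q2 hcc2 (ga * a1 * (D1:ℤ) + de * a2 * (D2:ℤ)) d
    (by push_cast; linear_combination hdc2)
  have hL1inv : L1 = (de:ℚ) * M1 - (be:ℚ) * M2 := by
    linear_combination (-(de:ℚ)) * hU1 + (be:ℚ) * hU2 - L1 * hdetQ
  have hL2inv : L2 = -(ga:ℚ) * M1 + (al:ℚ) * M2 := by
    linear_combination (ga:ℚ) * hU1 - (al:ℚ) * hU2 - L2 * hdetQ
  have hda1 : (a1:ℚ) * (d':ℚ) = (p1:ℚ) * ((de:ℚ) * E1 * c1 - (be:ℚ) * E2 * c2) := by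
    linear_combination (-(d':ℚ)) * hL1 + (p1:ℚ) * (d':ℚ) * hL1inv +
      (p1:ℚ) * de * (-(M1 * hE1Q) + (E1:ℚ) * hM1) - (p1:ℚ) * be * (-(M2 * hE2Q) + (E2:ℚ) * hM2)
  have hda2 : (a2:ℚ) * (d':ℚ) = (p2:ℚ) * (-(ga:ℚ) * E1 * c1 + (al:ℚ) * E2 * c2) := by
    linear_combination (-(d':ℚ)) * hL2 + (p2:ℚ) * (d':ℚ) * hL2inv +
      (p2:ℚ) * (-(ga:ℚ)) * (-(M1 * hE1Q) + (E1:ℚ) * hM1) +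
      (p2:ℚ) * al * (-(M2 * hE2Q) + (E2:ℚ) * hM2)
  have hp1d' : p1 ∣ d' := den_dvd_aux a1 p1 hca1 (de * (E1:ℤ) * c1 - be * (E2:ℤ) * c2) d'
    (by push_cast; linear_combination hda1)
  have hp2d' : p2 ∣ d' := den_dvd_aux a2 p2 hca2 (-ga * (E1:ℤ) * c1 + al * (E2:ℤ) * c2) d'
    (by push_cast; linear_combination hda2)
  exact Nat.dvd_antisymm (Nat.lcm_dvd hp1d' hp2d') (Nat.lcm_dvd hq1d hq2d)


/-- Abstract one-step lemma: transporting the unimodular relation between the two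
derived exponent sequences through one step of the recursion. -/
private lemma step_core
    (p1 p2 q1 q2 r s rr ss : ℕ) (a1 a2 c1 c2 al be ga de : ℤ)
    (hp1 : 0 < p1) (hp2 : 0 < p2) (hq1 : 0 < q1) (hq2 : 0 < q2)
    (hcopa1 : Int.gcd a1 (p1:ℤ) = 1)
    (hrs1 : (p2:ℤ) * (s:ℤ) - a2 * (r:ℤ) = 1) (hrs2 : (q1:ℤ) * (ss:ℤ) - c1 * (rr:ℤ) = 1)
    (hlcm : Nat.lcm q1 q2 = Nat.lcm p1 p2)
    (L1 L2 M1 M2 : ℚ)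
    (hL1 : (p1:ℚ) * L1 = (a1:ℚ)) (hL2 : (p2:ℚ) * L2 = (a2:ℚ))
    (hM1 : (q1:ℚ) * M1 = (c1:ℚ)) (hM2 : (q2:ℚ) * M2 = (c2:ℚ))
    (hU1 : M1 = (al:ℚ) * L1 + (be:ℚ) * L2) (hU2 : M2 = (ga:ℚ) * L1 + (de:ℚ) * L2)
    (hdet : al * de - be * ga = 1) :
    ∃ al' be' ga' de' : ℤ, al' * de' - be' * ga' = 1 ∧
      ∀ x1 x2 : ℚ,
        (q1:ℚ) * ((al:ℚ) * x1 + (be:ℚ) * x2 - M1 + (Nat.lcm q1 q2 : ℚ) * M1) =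
          (al':ℚ) * (((Nat.lcm p1 p2 / p2 : ℕ):ℚ) * (x1 - L1 + (Nat.lcm p1 p2 : ℚ) * L1) +
              ((Nat.lcm p1 p2 / p2 : ℕ):ℚ) * (r:ℚ) * L1 *
                ((p2:ℚ) * (x2 - L2 + (Nat.lcm p1 p2 : ℚ) * L2))) +
            (be':ℚ) * ((p2:ℚ) * (x2 - L2 + (Nat.lcm p1 p2 : ℚ) * L2)) ∧
        ((Nat.lcm q1 q2 / q1 : ℕ):ℚ) * ((ga:ℚ) * x1 + (de:ℚ) * x2 - M2 + (Nat.lcm q1 q2 : ℚ) * M2) +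
            ((Nat.lcm q1 q2 / q1 : ℕ):ℚ) * (rr:ℚ) * M2 *
              ((q1:ℚ) * ((al:ℚ) * x1 + (be:ℚ) * x2 - M1 + (Nat.lcm q1 q2 : ℚ) * M1)) =
          (ga':ℚ) * (((Nat.lcm p1 p2 / p2 : ℕ):ℚ) * (x1 - L1 + (Nat.lcm p1 p2 : ℚ) * L1) +
              ((Nat.lcm p1 p2 / p2 : ℕ):ℚ) * (r:ℚ) * L1 *
                ((p2:ℚ) * (x2 - L2 + (Nat.lcm p1 p2 : ℚ) * L2))) +
            (de':ℚ) * ((p2:ℚ) * (x2 - L2 + (Nat.lcm p1 p2 : ℚ) * L2)) := by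
  -- numeric notation
  set d : ℕ := Nat.lcm p1 p2 with hdDef
  have hq1d : q1 ∣ d := hlcm ▸ Nat.dvd_lcm_left q1 q2
  have hq2d : q2 ∣ d := hlcm ▸ Nat.dvd_lcm_right q1 q2
  have hD1n : d / p1 * p1 = d := Nat.div_mul_cancel (Nat.dvd_lcm_left p1 p2)
  have hD2n : d / p2 * p2 = d := Nat.div_mul_cancel (Nat.dvd_lcm_right p1 p2)
  have hE1n : d / q1 * q1 = d := Nat.div_mul_cancel hq1d
  have hE2n : d / q2 * q2 = d := Nat.div_mul_cancel hq2d
  set D1 : ℕ := d / p1 with hD1Def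
  set D2 : ℕ := d / p2 with hD2Def
  set E1 : ℕ := d / q1 with hE1Def
  set E2 : ℕ := d / q2 with hE2Def
  -- gcd facts
  set g : ℕ := Nat.gcd p1 p2 with hgDef
  have hg : 0 < g := Nat.gcd_pos_of_pos_left p2 hp1
  have hgd : g * d = p1 * p2 := Nat.gcd_mul_lcm p1 p2
  have hGD2 : g * D2 = p1 := by
    have h1 : g * D2 * p2 = p1 * p2 := by rw [mul_assoc, hD2n, hgd]
    exact Nat.eq_of_mul_eq_mul_right hp2 h1
  have hGD1 : g * D1 = p2 := by
    have h1 : g * D1 * p1 = p2 * p1 := by rw [mul_assoc, hD1n, hgd, mul_comm]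
    exact Nat.eq_of_mul_eq_mul_right hp1 h1
  -- Bézout
  have hcD2D1 : Nat.Coprime D2 D1 := by
    have h1 : g * Nat.gcd D2 D1 = g * 1 := by
      rw [← Nat.gcd_mul_left, hGD2, hGD1, mul_one]
    exact Nat.eq_of_mul_eq_mul_left hg h1
  have hcop1 : IsCoprime (D2:ℤ) (D1:ℤ) := Nat.isCoprime_iff_coprime.mpr hcD2D1
  have hD2dvdp1 : (D2:ℤ) ∣ (p1:ℤ) := by
    exact_mod_cast Int.natCast_dvd_natCast.mpr ⟨g, by rw [← hGD2, mul_comm]⟩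
  have hp1a1 : IsCoprime ((p1:ℤ)) a1 :=
    (Int.isCoprime_iff_gcd_eq_one.mpr hcopa1).symm
  have hD2a1 : IsCoprime (D2:ℤ) a1 := hp1a1.of_isCoprime_of_dvd_left hD2dvdp1
  obtain ⟨phi, psi, hb⟩ := hcop1.mul_right hD2a1
  -- ℚ-level facts
  have hp2Q : (p2:ℚ) ≠ 0 := by positivity
  have hq1Q : (q1:ℚ) ≠ 0 := by positivity
  have hq2Q : (q2:ℚ) ≠ 0 := by positivity
  have hdn0 : d ≠ 0 := Nat.lcm_ne_zero (by omega) (by omega)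
  have hdQ0 : (d:ℚ) ≠ 0 := Nat.cast_ne_zero.mpr hdn0
  have hD1Q : (D1:ℚ) * (p1:ℚ) = (d:ℚ) := by exact_mod_cast hD1n
  have hD2Q : (D2:ℚ) * (p2:ℚ) = (d:ℚ) := by exact_mod_cast hD2n
  have hE1Q : (E1:ℚ) * (q1:ℚ) = (d:ℚ) := by exact_mod_cast hE1n
  have hE2Q : (E2:ℚ) * (q2:ℚ) = (d:ℚ) := by exact_mod_cast hE2n
  have hbQ : (phi:ℚ) * (D2:ℚ) + (psi:ℚ) * ((D1:ℚ) * (a1:ℚ)) = 1 := by exact_mod_cast hb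
  have hrs1Q : (p2:ℚ) * (s:ℚ) - (a2:ℚ) * (r:ℚ) = 1 := by exact_mod_cast hrs1
  have hrs2Q : (q1:ℚ) * (ss:ℚ) - (c1:ℚ) * (rr:ℚ) = 1 := by exact_mod_cast hrs2
  have hdetQ : (al:ℚ) * (de:ℚ) - (be:ℚ) * (ga:ℚ) = 1 := by exact_mod_cast hdet
  -- derived divisibility identities
  have hdc1 : (c1:ℚ) * (d:ℚ) = (q1:ℚ) * ((al:ℚ) * a1 * D1 + (be:ℚ) * a2 * D2) := by
    linear_combination (-(d:ℚ)) * hM1 + (q1:ℚ) * (d:ℚ) * hU1 - (q1:ℚ) * al * L1 * hD1Q +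
      (q1:ℚ) * al * D1 * hL1 - (q1:ℚ) * be * L2 * hD2Q + (q1:ℚ) * be * D2 * hL2
  have hdc2 : (c2:ℚ) * (d:ℚ) = (q2:ℚ) * ((ga:ℚ) * a1 * D1 + (de:ℚ) * a2 * D2) := by
    linear_combination (-(d:ℚ)) * hM2 + (q2:ℚ) * (d:ℚ) * hU2 - (q2:ℚ) * ga * L1 * hD1Q +
      (q2:ℚ) * ga * D1 * hL1 - (q2:ℚ) * de * L2 * hD2Q + (q2:ℚ) * de * D2 * hL2
  have hE1c1 : (E1:ℚ) * (c1:ℚ) = (al:ℚ) * a1 * D1 + (be:ℚ) * a2 * D2 := by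
    apply mul_left_cancel₀ hq1Q
    linear_combination (c1:ℚ) * hE1Q + hdc1
  have hE2c2 : (E2:ℚ) * (c2:ℚ) = (ga:ℚ) * a1 * D1 + (de:ℚ) * a2 * D2 := by
    apply mul_left_cancel₀ hq2Q
    linear_combination (c2:ℚ) * hE2Q + hdc2
  -- the new unimodular matrix
  set alp : ℤ := (q1:ℤ) * (al * phi - be * psi * a2) + psi * (p2:ℤ) * c1 with halpDef
  set bep : ℤ := (q1:ℤ) * be * (s:ℤ) - (r:ℤ) * c1 with hbepDef
  set gap : ℤ := (E2:ℤ) * (rr:ℤ) * c2 * (al * phi - be * psi * a2) +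
      (E1:ℤ) * (ga * phi - de * psi * a2) + psi * (p2:ℤ) * (E2:ℤ) * (ss:ℤ) * c2 with hgapDef
  set dep : ℤ := (E2:ℤ) * (rr:ℤ) * c2 * be * (s:ℤ) + (E1:ℤ) * de * (s:ℤ) -
      (E2:ℤ) * (ss:ℤ) * (r:ℤ) * c2 with hdepDef
  have halpQ : ((alp:ℤ):ℚ) = (q1:ℚ) * ((al:ℚ) * phi - (be:ℚ) * psi * a2) + (psi:ℚ) * p2 * c1 := by
    rw [halpDef]; push_cast; ring
  have hbepQ : ((bep:ℤ):ℚ) = (q1:ℚ) * be * s - (r:ℚ) * c1 := by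
    rw [hbepDef]; push_cast; ring
  have hgapQ : ((gap:ℤ):ℚ) = (E2:ℚ) * rr * c2 * ((al:ℚ) * phi - (be:ℚ) * psi * a2) +
      (E1:ℚ) * ((ga:ℚ) * phi - (de:ℚ) * psi * a2) + (psi:ℚ) * p2 * E2 * ss * c2 := by
    rw [hgapDef]; push_cast; ring
  have hdepQ : ((dep:ℤ):ℚ) = (E2:ℚ) * rr * c2 * be * s + (E1:ℚ) * de * s -
      (E2:ℚ) * ss * r * c2 := by
    rw [hdepDef]; push_cast; ring
  have I1 : ((alp:ℤ):ℚ) * (D2:ℚ) = (q1:ℚ) * al := by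
    linear_combination (D2:ℚ) * halpQ + (psi:ℚ) * c1 * hD2Q + (psi:ℚ) * hdc1 + (q1:ℚ) * al * hbQ
  have I2 : ((alp:ℤ):ℚ) * ((D1:ℚ) * r * a1) + ((bep:ℤ):ℚ) * (p2:ℚ) = (q1:ℚ) * be := by
    linear_combination ((D1:ℚ) * r * a1) * halpQ + (p2:ℚ) * hbepQ + (q1:ℚ) * be * hrs1Q +
      ((r:ℚ) * p2 * c1 - (q1:ℚ) * be * a2 * r) * hbQ - (r:ℚ) * phi * c1 * hD2Q -
      (r:ℚ) * phi * hdc1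
  have I3 : ((gap:ℤ):ℚ) * (D2:ℚ) = (E2:ℚ) * rr * c2 * al + (E1:ℚ) * ga := by
    linear_combination (D2:ℚ) * hgapQ + (psi:ℚ) * E2 * ss * c2 * hD2Q +
      (psi:ℚ) * E2 * c2 * E1 * hrs2Q - (psi:ℚ) * E2 * c2 * ss * hE1Q +
      (E2:ℚ) * rr * c2 * psi * hE1c1 + (psi:ℚ) * E1 * hE2c2 +
      ((E2:ℚ) * rr * c2 * al + (E1:ℚ) * ga) * hbQ
  have I4 : ((gap:ℤ):ℚ) * ((D1:ℚ) * r * a1) + ((dep:ℤ):ℚ) * (p2:ℚ) =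
      (E2:ℚ) * rr * c2 * be + (E1:ℚ) * de := by
    linear_combination ((D1:ℚ) * r * a1) * hgapQ + (p2:ℚ) * hdepQ +
      (E2:ℚ) * ss * c2 * r * p2 * hbQ - (r:ℚ) * phi * E2 * ss * c2 * hD2Q +
      (r:ℚ) * phi * E2 * c2 * ss * hE1Q - (r:ℚ) * phi * E2 * c2 * E1 * hrs2Q -
      (r:ℚ) * phi * E1 * hE2c2 - (r:ℚ) * phi * (E2:ℚ) * rr * c2 * hE1c1 +
      (E2:ℚ) * rr * c2 * be * hrs1Q - (E2:ℚ) * rr * c2 * be * r * a2 * hbQ +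
      (E1:ℚ) * de * hrs1Q - (E1:ℚ) * de * r * a2 * hbQ
  have hdet' : alp * dep - bep * gap = 1 := by
    have hQ : (((alp * dep - bep * gap : ℤ)):ℚ) * (d:ℚ) = 1 * (d:ℚ) := by
      push_cast
      linear_combination (((dep:ℤ):ℚ) * p2 + ((gap:ℤ):ℚ) * D1 * r * a1) * I1 +
        (q1:ℚ) * al * I4 - (((alp:ℤ):ℚ) * D1 * r * a1 + ((bep:ℤ):ℚ) * p2) * I3 -
        ((E2:ℚ) * rr * c2 * al + (E1:ℚ) * ga) * I2 + (q1:ℚ) * E1 * hdetQ + hE1Q -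
        (((alp:ℤ):ℚ) * dep - ((bep:ℤ):ℚ) * gap) * hD2Q
    have := mul_right_cancel₀ hdQ0 hQ
    exact_mod_cast this
  refine ⟨alp, bep, gap, dep, hdet', fun x1 x2 => ?_⟩
  rw [hlcm, ← hE1Def]
  constructor
  · linear_combination (q1:ℚ) * ((d:ℚ) - 1) * hU1 - (x1 - L1 + (d:ℚ) * L1) * I1 -
      (x2 - L2 + (d:ℚ) * L2) * I2 + ((alp:ℤ):ℚ) * r * (x2 - L2 + (d:ℚ) * L2) *
        (-(D1:ℚ) * hL1 + L1 * hD1Q - L1 * hD2Q)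
  · linear_combination
      (-(x1 - L1 + (d:ℚ) * L1)) * I3 - (x2 - L2 + (d:ℚ) * L2) * I4 +
      ((gap:ℤ):ℚ) * r * (x2 - L2 + (d:ℚ) * L2) * (-(D1:ℚ) * hL1 + L1 * hD1Q - L1 * hD2Q) +
      ((al:ℚ) * (x1 - L1 + (d:ℚ) * L1) + (be:ℚ) * (x2 - L2 + (d:ℚ) * L2)) * (rr:ℚ) *
        (((ga:ℚ) * L1 + (de:ℚ) * L2) * hE1Q - ((ga:ℚ) * L1 + (de:ℚ) * L2) * hE2Q +
          (E2:ℚ) * (hM2 - (q2:ℚ) * hU2)) +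
      (E1:ℚ) * ((d:ℚ) - 1) * hU2 +
      (E1:ℚ) * rr * (M2 * q1 * ((d:ℚ) - 1) * hU1 +
        ((q1:ℚ) * ((al:ℚ) * (x1 - L1 + (d:ℚ) * L1) + (be:ℚ) * (x2 - L2 + (d:ℚ) * L2))) * hU2)


private lemma inv_dd (D : QOData) (k : ℕ) (hk : k ≤ D.e - 1)
    (al be ga de : ℤ) (hdet : al * de - be * ga = 1)
    (hU1 : D.lam true false k 1 =
      (al:ℚ) * D.lam false false k 1 + (be:ℚ) * D.lam false true k 1)
    (hU2 : D.lam true true k 1 =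
      (ga:ℚ) * D.lam false false k 1 + (de:ℚ) * D.lam false true k 1) :
    D.dd false k = D.dd true k := by
  have hp1 := D.m_pos false false k hk
  have hp2 := D.m_pos false true k hk
  have hq1 := D.m_pos true false k hk
  have hq2 := D.m_pos true true k hk
  have np1 : (D.m false false k : ℚ) ≠ 0 := Nat.cast_ne_zero.mpr (by omega)
  have np2 : (D.m false true k : ℚ) ≠ 0 := Nat.cast_ne_zero.mpr (by omega)
  have nq1 : (D.m true false k : ℚ) ≠ 0 := Nat.cast_ne_zero.mpr (by omega)
  have nq2 : (D.m true true k : ℚ) ≠ 0 := Nat.cast_ne_zero.mpr (by omega)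
  have hL1 : (D.m false false k : ℚ) * D.lam false false k 1 = (D.n false false k : ℚ) := by
    rw [D.lead false false k hk, mul_comm, div_mul_cancel₀ _ np1]
  have hL2 : (D.m false true k : ℚ) * D.lam false true k 1 = (D.n false true k : ℚ) := by
    rw [D.lead false true k hk, mul_comm, div_mul_cancel₀ _ np2]
  have hM1 : (D.m true false k : ℚ) * D.lam true false k 1 = (D.n true false k : ℚ) := by
    rw [D.lead true false k hk, mul_comm, div_mul_cancel₀ _ nq1]
  have hM2 : (D.m true true k : ℚ) * D.lam true true k 1 = (D.n true true k : ℚ) := by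
    rw [D.lead true true k hk, mul_comm, div_mul_cancel₀ _ nq2]
  exact lcm_eq_core (D.m false false k) (D.m false true k) (D.m true false k)
    (D.m true true k) (D.n false false k) (D.n false true k) (D.n true false k)
    (D.n true true k) al be ga de (by omega) (by omega) (by omega) (by omega)
    (D.cop false false k hk) (D.cop false true k hk) (D.cop true false k hk)
    (D.cop true true k hk) _ _ _ _ hL1 hL2 hM1 hM2 hU1 hU2 hdet

private lemma inv_step (D : QOData) (k : ℕ) (hk1 : k + 1 ≤ D.e - 1)
    (al be ga de : ℤ) (hdet : al * de - be * ga = 1)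
    (hrel : ∀ j, 1 ≤ j → j ≤ D.e - k →
      D.lam true false k j = (al:ℚ) * D.lam false false k j + (be:ℚ) * D.lam false true k j ∧
      D.lam true true k j = (ga:ℚ) * D.lam false false k j + (de:ℚ) * D.lam false true k j) :
    ∃ al' be' ga' de' : ℤ, al' * de' - be' * ga' = 1 ∧ ∀ j, 1 ≤ j → j ≤ D.e - (k+1) →
      D.lam true false (k+1) j =
        (al':ℚ) * D.lam false false (k+1) j + (be':ℚ) * D.lam false true (k+1) j ∧
      D.lam true true (k+1) j =
        (ga':ℚ) * D.lam false false (k+1) j + (de':ℚ) * D.lam false true (k+1) j := by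
  have he := D.he
  have hk : k ≤ D.e - 1 := by omega
  have h1e : 1 ≤ D.e - k := by omega
  have hp1 := D.m_pos false false k hk
  have hp2 := D.m_pos false true k hk
  have hq1 := D.m_pos true false k hk
  have hq2 := D.m_pos true true k hk
  have np1 : (D.m false false k : ℚ) ≠ 0 := Nat.cast_ne_zero.mpr (by omega)
  have np2 : (D.m false true k : ℚ) ≠ 0 := Nat.cast_ne_zero.mpr (by omega)
  have nq1 : (D.m true false k : ℚ) ≠ 0 := Nat.cast_ne_zero.mpr (by omega)
  have nq2 : (D.m true true k : ℚ) ≠ 0 := Nat.cast_ne_zero.mpr (by omega)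
  have hL1 : (D.m false false k : ℚ) * D.lam false false k 1 = (D.n false false k : ℚ) := by
    rw [D.lead false false k hk, mul_comm, div_mul_cancel₀ _ np1]
  have hL2 : (D.m false true k : ℚ) * D.lam false true k 1 = (D.n false true k : ℚ) := by
    rw [D.lead false true k hk, mul_comm, div_mul_cancel₀ _ np2]
  have hM1 : (D.m true false k : ℚ) * D.lam true false k 1 = (D.n true false k : ℚ) := by
    rw [D.lead true false k hk, mul_comm, div_mul_cancel₀ _ nq1]
  have hM2 : (D.m true true k : ℚ) * D.lam true true k 1 = (D.n true true k : ℚ) := by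
    rw [D.lead true true k hk, mul_comm, div_mul_cancel₀ _ nq2]
  obtain ⟨hU1, hU2⟩ := hrel 1 le_rfl h1e
  have hlcm : Nat.lcm (D.m true false k) (D.m true true k) =
      Nat.lcm (D.m false false k) (D.m false true k) :=
    (inv_dd D k hk al be ga de hdet hU1 hU2).symm
  have hrs1 := D.rs_det false k hk
  simp only [Bool.not_false] at hrs1
  have hrs2 := D.rs_det true k hk
  simp only [Bool.not_true] at hrs2
  obtain ⟨al', be', ga', de', hdet', hkey⟩ :=
    step_core (D.m false false k) (D.m false true k) (D.m true false k) (D.m true true k)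
      (D.r false k) (D.s false k) (D.r true k) (D.s true k)
      (D.n false false k) (D.n false true k) (D.n true false k) (D.n true true k)
      al be ga de (by omega) (by omega) (by omega) (by omega)
      (D.cop false false k hk) hrs1 hrs2 hlcm _ _ _ _ hL1 hL2 hM1 hM2 hU1 hU2 hdet
  refine ⟨al', be', ga', de', hdet', fun j hj1 hj2 => ?_⟩
  obtain ⟨hx1, hx2⟩ := hrel (j+1) (by omega) (by omega)
  have e1 := D.rec_other false k j hk1 hj1 hj2
  simp only [Bool.not_false] at e1
  have e2 := D.rec_self false k j hk1 hj1 hj2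
  simp only [Bool.not_false] at e2
  have e3 := D.rec_other true k j hk1 hj1 hj2
  simp only [Bool.not_true] at e3
  have e4 := D.rec_self true k j hk1 hj1 hj2
  simp only [Bool.not_true] at e4
  rw [hx1] at e3
  rw [hx2, e3] at e4
  obtain ⟨key1, key2⟩ := hkey (D.lam false false k (j+1)) (D.lam false true k (j+1))
  constructor
  · rw [e3, e2, e1]; exact key1
  · rw [e4, e2, e1]; exact key2

/-- For every `k = 0,…,e−1`, `d_•^{(k)}(1) = d_•^{(k)}(2)`; consequently also
`d^{(k)}(1) = d^{(k)}(2)` for every `k = 0,…,e−1`. -/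
theorem degrees_eq (D : QOData) :
    (∀ k, k ≤ D.e - 1 → D.dd false k = D.dd true k) ∧
    (∀ k, k ≤ D.e - 1 → D.dTot false k = D.dTot true k) := by
  have he := D.he
  have main : ∀ k, k ≤ D.e - 1 → ∃ al be ga de : ℤ, al * de - be * ga = 1 ∧
      ∀ j, 1 ≤ j → j ≤ D.e - k →
        D.lam true false k j = (al:ℚ) * D.lam false false k j + (be:ℚ) * D.lam false true k j ∧
        D.lam true true k j = (ga:ℚ) * D.lam false false k j + (de:ℚ) * D.lam false true k j := by
    intro k
    induction k with
    | zero =>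
      intro _
      refine ⟨1, 0, 0, 1, by ring, fun j _ _ => ⟨?_, ?_⟩⟩ <;>
        simp [D.base]
    | succ k ih =>
      intro hk1
      obtain ⟨al, be, ga, de, hdet, hrel⟩ := ih (by omega)
      exact inv_step D k hk1 al be ga de hdet hrel
  have hdd : ∀ k, k ≤ D.e - 1 → D.dd false k = D.dd true k := by
    intro k hk
    obtain ⟨al, be, ga, de, hdet, hrel⟩ := main k hk
    exact inv_dd D k hk al be ga de hdet
      (hrel 1 le_rfl (by omega)).1 (hrel 1 le_rfl (by omega)).2
  refine ⟨hdd, fun k hk => ?_⟩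
  unfold QOData.dTot
  exact Finset.prod_congr rfl fun l hl => hdd l (by
    rcases Finset.mem_Ico.mp hl with ⟨_, h2⟩
    omega)
end

section
/- For each i ∈ {1,2} and each k = 1, …, e, the rational number λ_{ĩ,k} · ∏_{l=0}^{k−1} m_ĩ^{(l)}(i) is an integer, and this integer is relatively prime to m_ĩ^{(k−1)}(i). In other words, λ_{ĩ,k} may be written as a fraction with denominator m_ĩ · m'_ĩ(i) · m_ĩ^{(2)}(i) ⋯ m_ĩ^{(k−1)}(i) and with numerator relatively prime to m_ĩ^{(k−1)}(i). -/
/-!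
Since `m_ĩ^{(t)}(i) · λ^{(t)}_{ĩ,1}(i) = n_ĩ^{(t)}(i)` is an integer, the recursion for
`λ^{(t+1)}_{ĩ,j}(i)` equals `m_ĩ^{(t)}(i) · λ^{(t)}_{ĩ,j+1}(i)` up to an integer. By induction,
`λ^{(t)}_{ĩ,j}(i) ≡ (∏_{l<t} m_ĩ^{(l)}(i)) · λ_{ĩ,t+j}` modulo `ℤ`. Taking `t = k − 1`, `j = 1`
and multiplying by `m_ĩ^{(k−1)}(i)` gives
`λ_{ĩ,k} · ∏_{l<k} m_ĩ^{(l)}(i) ≡ n_ĩ^{(k−1)}(i)` modulo `m_ĩ^{(k−1)}(i)`, and `n_ĩ^{(k−1)}(i)` is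
prime to `m_ĩ^{(k−1)}(i)`.
-/

namespace QOData

variable (D : QOData) (i : Bool)

theorem m_mul_lam_lead (u : Bool) {k : ℕ} (hk : k ≤ D.e - 1) :
    (D.m i u k : ℚ) * D.lam i u k 1 = D.n i u k := by
  have hm : (D.m i u k : ℚ) ≠ 0 := by
    exact_mod_cast Nat.one_le_iff_ne_zero.mp (D.m_pos i u k hk)
  rw [D.lead i u k hk]
  field_simp

theorem exists_lam_other_eq_prod_mul_lam0_add_int {t j : ℕ} (ht : t ≤ D.e - 1) (hj1 : 1 ≤ j)
    (hj : j ≤ D.e - t) :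
    ∃ N : ℤ, D.lam i (!i) t j =
      (∏ l ∈ Finset.range t, (D.m i (!i) l : ℚ)) * D.lam0 (!i) (t + j) + N := by
  induction t generalizing j with
  | zero => exact ⟨0, by simp [D.base]⟩
  | succ t ih =>
    have ht' : t ≤ D.e - 1 := by omega
    obtain ⟨N, hN⟩ := ih ht' (j := j + 1) (by omega) (by omega)
    rw [show t + (j + 1) = t + 1 + j by omega] at hN
    refine ⟨D.m i (!i) t * N + (D.dd i t - 1) * D.n i (!i) t, ?_⟩
    rw [D.rec_other i t j ht hj1 hj, hN, Finset.prod_range_succ]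
    push_cast [dd]
    linear_combination ((Nat.lcm (D.m i false t) (D.m i true t) : ℚ) - 1) *
      D.m_mul_lam_lead i (!i) ht'

end QOData

/-- `λ_{ĩ,k} · ∏_{l=0}^{k−1} m_ĩ^{(l)}(i)` is an integer relatively prime to
`m_ĩ^{(k−1)}(i)`; i.e. `λ_{ĩ,k}` may be written as a fraction with denominator
`m_ĩ · m'_ĩ(i) ⋯ m_ĩ^{(k−1)}(i)` and numerator relatively prime to `m_ĩ^{(k−1)}(i)`. -/
theorem denominator_interpretation (D : QOData) (i : Bool) (k : ℕ)
    (hk1 : 1 ≤ k) (hke : k ≤ D.e) :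
    ∃ N : ℤ,
      D.lam0 (!i) k * ∏ l ∈ Finset.range k, ((D.m i (!i) l : ℚ)) = (N : ℚ) ∧
      Int.gcd N ((D.m i (!i) (k - 1) : ℤ)) = 1 := by
  obtain ⟨t, rfl⟩ : ∃ t, k = t + 1 := ⟨k - 1, by omega⟩
  have ht : t ≤ D.e - 1 := by omega
  obtain ⟨N, hN⟩ := D.exists_lam_other_eq_prod_mul_lam0_add_int i ht le_rfl (by omega)
  refine ⟨D.n i (!i) t - D.m i (!i) t * N, ?_, ?_⟩
  · rw [Finset.prod_range_succ]
    push_cast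
    linear_combination D.m_mul_lam_lead i (!i) ht - (D.m i (!i) t : ℚ) * hN
  · rw [Nat.add_sub_cancel, Int.gcd_sub_mul_left_left]
    exact D.cop i (!i) t ht
end

section
/- For each k = 1, …, e, the product ∏_{l=0}^{k−1} d_•^{(l)}(1) divides the product (∏_{l=0}^{k−1} m₁^{(l)}(2)) · (∏_{l=0}^{k−1} m₂^{(l)}(1)). That is, the degree d_• d_•' d_•^{(2)} ⋯ d_•^{(k−1)} of the surface defined by the first k characteristic terms divides (m₁ m₁'(2) m₁^{(2)}(2) ⋯ m₁^{(k−1)}(2)) · (m₂ m₂'(1) m₂^{(2)}(1) ⋯ m₂^{(k−1)}(1)). -/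
open Finset

def det2 (v w : ℚ × ℚ) : ℚ := v.1 * w.2 - w.1 * v.2

def shear (α β γ : ℚ) : ℚ × ℚ →+ ℚ × ℚ where
  toFun v := (α * v.1 + β * v.2, γ * v.2)
  map_zero' := by simp
  map_add' v w := by ext <;> simp only [Prod.fst_add, Prod.snd_add] <;> ring

lemma det2_shear (α β γ : ℚ) (v w : ℚ × ℚ) :
    det2 (shear α β γ v) (shear α β γ w) = α * γ * det2 v w := by
  simp only [det2, shear, AddMonoidHom.coe_mk, ZeroHom.coe_mk]
  ring

/-- The lattice `(1/A)ℤ × (1/B)ℤ`. -/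
def fracLattice (A B : ℕ) : AddSubgroup (ℚ × ℚ) :=
  ((Int.castAddHom ℚ).range.prod (Int.castAddHom ℚ).range).comap
    ((AddMonoidHom.mulLeft (A : ℚ)).prodMap (AddMonoidHom.mulLeft (B : ℚ)))

lemma mem_fracLattice {A B : ℕ} {v : ℚ × ℚ} :
    v ∈ fracLattice A B ↔ (∃ z : ℤ, (z : ℚ) = A * v.1) ∧ ∃ z : ℤ, (z : ℚ) = B * v.2 :=
  Iff.rfl

lemma dvd_mul_of_det2_mul_eq_one {A B P : ℕ} {v w : ℚ × ℚ} (hv : v ∈ fracLattice A B)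
    (hw : w ∈ fracLattice A B) (h : det2 v w * P = 1) : P ∣ A * B := by
  obtain ⟨⟨a, ha⟩, ⟨b, hb⟩⟩ := mem_fracLattice.mp hv
  obtain ⟨⟨c, hc⟩, ⟨d, hd⟩⟩ := mem_fracLattice.mp hw
  have hAB : ((A * B : ℕ) : ℚ) = ((a * d - c * b) * P : ℤ) := by
    push_cast
    rw [ha, hb, hc, hd]
    unfold det2 at h
    linear_combination (-(A * B : ℚ)) * h
  exact Int.natCast_dvd_natCast.mp ⟨a * d - c * b, by rw [mul_comm (P : ℤ)]; exact_mod_cast hAB⟩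

lemma inv_smul_mem_of_isCoprime {M : Type*} [AddCommGroup M] [Module ℚ M] {H : AddSubgroup M}
    {x : M} {a b : ℤ} (hab : IsCoprime a b) (hx : x ∈ H) (hax : ((a : ℚ) / b) • x ∈ H) :
    (b : ℚ)⁻¹ • x ∈ H := by
  obtain ⟨u, v, huv⟩ := hab
  rcases eq_or_ne b 0 with rfl | hb
  · simp
  have hinv : (b : ℚ)⁻¹ = u * ((a : ℚ) / b) + v := by
    field_simp
    exact_mod_cast (by linear_combination huv.symm : (1 : ℤ) = u * a + b * v)
  rw [hinv, add_smul, mul_smul, Int.cast_smul_eq_zsmul, Int.cast_smul_eq_zsmul]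
  exact add_mem (H.zsmul_mem hax u) (H.zsmul_mem hx v)

theorem Nat.lcm_div_right_eq {m m' : ℕ} (hm' : 0 < m') : m.lcm m' / m' = m / m.gcd m' := by
  rw [Nat.lcm, Nat.div_div_eq_div_mul, mul_comm (m.gcd m'), ← Nat.div_div_eq_div_mul,
    Nat.mul_div_cancel _ hm']

lemma exists_isCoprime_div_lcm_div_eq {n : ℤ} {m m' : ℕ} (hm : 0 < m) (hm' : 0 < m')
    (hn : IsCoprime n m) :
    ∃ a : ℤ, IsCoprime a (m.lcm m' / m' : ℕ) ∧ (a : ℚ) / (m.lcm m' / m' : ℕ) = m' * (n / m) := by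
  have hg : 0 < m.gcd m' := Nat.gcd_pos_of_pos_left m' hm
  rw [Nat.lcm_div_right_eq hm']
  refine ⟨n * (m' / m.gcd m' : ℕ), IsCoprime.mul_left ?_ ?_, ?_⟩
  · exact hn.of_isCoprime_of_dvd_right (Int.natCast_dvd_natCast.mpr (Nat.div_dvd_of_dvd
      (Nat.gcd_dvd_left m m')))
  · exact Nat.isCoprime_iff_coprime.mpr (Nat.coprime_div_gcd_div_gcd hg).symm
  · have hgQ : (m.gcd m' : ℚ) ≠ 0 := by exact_mod_cast hg.ne'
    have hmQ : (m : ℚ) ≠ 0 := by exact_mod_cast hm.ne'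
    rw [Int.cast_mul, Int.cast_natCast, Nat.cast_div (Nat.gcd_dvd_left m m') hgQ,
      Nat.cast_div (Nat.gcd_dvd_right m m') hgQ]
    field_simp

namespace QOData

variable (D : QOData)

lemma m_pos_of_lt {i u : Bool} {k : ℕ} (hk : k < D.e) : 0 < D.m i u k :=
  D.m_pos i u k (by omega)

lemma m_mul_lam_one (i u : Bool) {k : ℕ} (hk : k < D.e) :
    (D.m i u k : ℚ) * D.lam i u k 1 = D.n i u k := by
  have hm : (D.m i u k : ℚ) ≠ 0 := by exact_mod_cast (D.m_pos_of_lt hk).ne'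
  rw [D.lead i u k (by omega)]
  field_simp

lemma dd_eq_b_mul_m (i : Bool) (k : ℕ) : D.dd i k = D.b i k * D.m i (!i) k := by
  refine (Nat.div_mul_cancel ?_).symm
  cases i
  · exact Nat.dvd_lcm_right _ _
  · exact Nat.dvd_lcm_left _ _

lemma b_pos {i : Bool} {k : ℕ} (hk : k < D.e) : 0 < D.b i k := by
  have hdd : 0 < D.dd i k :=
    Nat.pos_of_ne_zero (Nat.lcm_ne_zero (D.m_pos_of_lt hk).ne' (D.m_pos_of_lt hk).ne')
  rw [D.dd_eq_b_mul_m] at hdd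
  exact Nat.pos_of_mul_pos_right hdd

lemma exists_int_eq_prod_m_mul_lam (i : Bool) {k : ℕ} (hke : k ≤ D.e) {t j : ℕ} (hj : 1 ≤ j)
    (htj : t + j ≤ k) :
    ∃ z : ℤ, (z : ℚ) = ((∏ l ∈ Ico t k, D.m i (!i) l : ℕ) : ℚ) * D.lam i (!i) t j := by
  induction j generalizing t with
  | zero => omega
  | succ j ih =>
    rw [prod_eq_prod_Ico_succ_bot (by omega : t < k), Nat.cast_mul]
    set N := ∏ l ∈ Ico (t + 1) k, D.m i (!i) l
    have hlead := D.m_mul_lam_one i (!i) (k := t) (by omega)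
    rcases Nat.eq_zero_or_pos j with rfl | hj
    · exact ⟨N * D.n i (!i) t, by push_cast; linear_combination -(N : ℚ) * hlead⟩
    · obtain ⟨z, hz⟩ := ih hj (t := t + 1) (by omega)
      refine ⟨z + N * (1 - D.dd i t) * D.n i (!i) t, ?_⟩
      rw [D.rec_other i t j (by omega) hj (by omega)] at hz
      push_cast [dd]
      linear_combination hz - (N : ℚ) * (1 - (Nat.lcm (D.m i false t) (D.m i true t) : ℚ)) * hlead

def pair (t j : ℕ) : ℚ × ℚ := (D.lam false false t j, D.lam false true t j)

def pairLattice (k t : ℕ) : AddSubgroup (ℚ × ℚ) :=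
  AddSubgroup.closure ({(1, 0), (0, 1)} ∪ D.pair t '' Set.Icc 1 (k - t))

section pairLattice

variable {D} {k t : ℕ}

lemma fst_mem_pairLattice : ((1 : ℚ), (0 : ℚ)) ∈ D.pairLattice k t :=
  AddSubgroup.subset_closure (.inl (.inl rfl))

lemma snd_mem_pairLattice : ((0 : ℚ), (1 : ℚ)) ∈ D.pairLattice k t :=
  AddSubgroup.subset_closure (.inl (.inr rfl))

lemma pair_mem_pairLattice {j : ℕ} (hj : 1 ≤ j) (hjk : j ≤ k - t) :
    D.pair t j ∈ D.pairLattice k t :=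
  AddSubgroup.subset_closure (.inr ⟨j, ⟨hj, hjk⟩, rfl⟩)

end pairLattice

/-- The inverse of the change of coordinates `(X₁, X₂) ↦ (b X₁ + b r λ₁ m₂ X₂, m₂ X₂)`
by which the recursion passes from level `t` to level `t + 1`. -/
def descentMap (t : ℕ) : ℚ × ℚ →+ ℚ × ℚ :=
  shear (D.b false t : ℚ)⁻¹ (-(D.r false t * D.lam false false t 1)) (D.m false true t : ℚ)⁻¹

lemma det2_descentMap_mul_dd {t : ℕ} (ht : t < D.e) (v w : ℚ × ℚ) :
    det2 (D.descentMap t v) (D.descentMap t w) * D.dd false t = det2 v w := by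
  have hb : (D.b false t : ℚ) ≠ 0 := by exact_mod_cast (D.b_pos ht).ne'
  have hm : (D.m false true t : ℚ) ≠ 0 := by exact_mod_cast (D.m_pos_of_lt ht).ne'
  rw [descentMap, det2_shear, D.dd_eq_b_mul_m, Nat.cast_mul, Bool.not_false]
  field_simp

lemma descentMap_pair {t j : ℕ} (ht : t + 1 < D.e) (hj : 1 ≤ j) (hjt : j ≤ D.e - (t + 1)) :
    D.descentMap t (D.pair (t + 1) j) =
      D.pair t (j + 1) + ((D.dd false t : ℤ) - 1) • D.pair t 1 := by
  have hb : (D.b false t : ℚ) ≠ 0 := by exact_mod_cast (D.b_pos (by omega)).ne'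
  have hm : (D.m false true t : ℚ) ≠ 0 := by exact_mod_cast (D.m_pos_of_lt (by omega)).ne'
  have hself := D.rec_self false t j (by omega) hj hjt
  have hother := D.rec_other false t j (by omega) hj hjt
  simp only [Bool.not_false] at hself hother
  change _ = (D.b false t : ℚ) * _ + (D.b false t : ℚ) * _ * _ * _ at hself
  simp only [descentMap, shear, pair, AddMonoidHom.coe_mk, ZeroHom.coe_mk, Prod.smul_mk,
    zsmul_eq_mul, Prod.mk_add_mk, Prod.mk.injEq]
  push_cast [dd]
  constructor
  · rw [hself, hother]
    field_simp
    ring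
  · rw [hother]
    field_simp
    ring

lemma descentMap_snd {t : ℕ} (ht : t < D.e) :
    D.descentMap t (0, 1) = (-(D.r false t : ℤ)) • D.pair t 1 + (D.s false t : ℤ) • (0, 1) := by
  have hm : (D.m false true t : ℚ) ≠ 0 := by exact_mod_cast (D.m_pos_of_lt ht).ne'
  have hdet : (D.m false true t : ℚ) * D.s false t - D.n false true t * D.r false t = 1 := by
    exact_mod_cast D.rs_det false t (by omega)
  have hlead := D.m_mul_lam_one false true ht
  simp only [descentMap, shear, pair, AddMonoidHom.coe_mk, ZeroHom.coe_mk, Prod.smul_mk,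
    zsmul_eq_mul, Prod.mk_add_mk, Prod.mk.injEq]
  push_cast
  refine ⟨by ring, ?_⟩
  field_simp
  linear_combination -hdet + (D.r false t : ℚ) * hlead

lemma descentMap_fst_mem {k t : ℕ} (hke : k ≤ D.e) (ht : t < k) :
    D.descentMap t (1, 0) ∈ D.pairLattice k t := by
  have hte : t < D.e := by omega
  obtain ⟨a, hab, ha⟩ : ∃ a : ℤ, IsCoprime a (D.b false t) ∧
      (a : ℚ) / D.b false t = D.m false true t * (D.n false false t / D.m false false t) :=
    exists_isCoprime_div_lcm_div_eq (D.m_pos_of_lt hte) (D.m_pos_of_lt hte)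
      (Int.isCoprime_iff_gcd_eq_one.mpr (D.cop false false t (by omega)))
  -- `(m₂ λ₁, 0) = m₂ p₁ - n₂ (0, 1)` lies in the lattice and `b` is the reduced denominator of
  -- its first coordinate, so Bézout yields `(1/b, 0)`.
  have hmul : ((a : ℚ) / D.b false t) • ((1 : ℚ), (0 : ℚ)) ∈ D.pairLattice k t := by
    have hmem : (D.m false true t : ℤ) • D.pair t 1 - D.n false true t • ((0 : ℚ), (1 : ℚ))
        ∈ D.pairLattice k t :=
      sub_mem (zsmul_mem (pair_mem_pairLattice le_rfl (by omega)) _)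
        (zsmul_mem snd_mem_pairLattice _)
    convert hmem using 1
    simp only [pair, Prod.smul_mk, zsmul_eq_mul, Prod.mk_sub_mk, smul_eq_mul, mul_one, mul_zero,
      Int.cast_natCast, sub_zero]
    rw [ha, ← D.lead false false t (by omega), D.m_mul_lam_one false true hte, sub_self]
  convert inv_smul_mem_of_isCoprime hab fst_mem_pairLattice hmul using 1
  simp only [descentMap, shear, AddMonoidHom.coe_mk, ZeroHom.coe_mk, Prod.smul_mk, smul_eq_mul,
    mul_one, mul_zero, add_zero, Int.cast_natCast]

lemma map_descentMap_le {k t : ℕ} (hke : k ≤ D.e) (ht : t < k) :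
    (D.pairLattice k (t + 1)).map (D.descentMap t) ≤ D.pairLattice k t := by
  rw [pairLattice, AddMonoidHom.map_closure, AddSubgroup.closure_le]
  rintro _ ⟨v, (rfl | rfl) | ⟨j, ⟨hj, hjk⟩, rfl⟩, rfl⟩
  · exact D.descentMap_fst_mem hke ht
  · rw [D.descentMap_snd (by omega)]
    exact add_mem (zsmul_mem (pair_mem_pairLattice le_rfl (by omega)) _)
      (zsmul_mem snd_mem_pairLattice _)
  · rw [D.descentMap_pair (by omega) hj (by omega)]
    exact add_mem (pair_mem_pairLattice (by omega) (by omega))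
      (zsmul_mem (pair_mem_pairLattice le_rfl (by omega)) _)

lemma exists_det2_mul_prod_eq_one {k t : ℕ} (hke : k ≤ D.e) (htk : t ≤ k) :
    ∃ v ∈ D.pairLattice k t, ∃ w ∈ D.pairLattice k t,
      det2 v w * ((∏ l ∈ Ico t k, D.dd false l : ℕ) : ℚ) = 1 := by
  induction htk using Nat.decreasingInduction with
  | self => exact ⟨_, fst_mem_pairLattice, _, snd_mem_pairLattice, by simp [det2]⟩
  | of_succ t ht ih =>
    obtain ⟨v, hv, w, hw, hvw⟩ := ih
    have hmap := D.map_descentMap_le hke ht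
    refine ⟨_, hmap ⟨v, hv, rfl⟩, _, hmap ⟨w, hw, rfl⟩, ?_⟩
    rw [prod_eq_prod_Ico_succ_bot ht, Nat.cast_mul, ← mul_assoc,
      D.det2_descentMap_mul_dd (by omega), hvw]

lemma pairLattice_zero_le_fracLattice {k : ℕ} (hke : k ≤ D.e) :
    D.pairLattice k 0 ≤
      fracLattice (∏ l ∈ range k, D.m true false l) (∏ l ∈ range k, D.m false true l) := by
  rw [pairLattice, AddSubgroup.closure_le]
  rintro _ ((rfl | rfl) | ⟨j, ⟨hj, hjk⟩, rfl⟩)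
  · exact mem_fracLattice.mpr ⟨⟨_, (mul_one _).symm⟩, ⟨0, by simp⟩⟩
  · exact mem_fracLattice.mpr ⟨⟨0, by simp⟩, ⟨_, (mul_one _).symm⟩⟩
  · rw [range_eq_Ico]
    refine mem_fracLattice.mpr ⟨?_, D.exists_int_eq_prod_m_mul_lam false hke hj (by omega)⟩
    obtain ⟨z, hz⟩ := D.exists_int_eq_prod_m_mul_lam true hke hj (t := 0) (by omega)
    refine ⟨z, hz.trans ?_⟩
    simp only [Bool.not_true, pair, D.base]

end QOData

theorem degree_divides_general (D : QOData) (k : ℕ) (hke : k ≤ D.e) :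
    (∏ l ∈ Finset.range k, D.dd false l) ∣
      (∏ l ∈ Finset.range k, D.m true false l) * (∏ l ∈ Finset.range k, D.m false true l) := by
  obtain ⟨v, hv, w, hw, hvw⟩ := D.exists_det2_mul_prod_eq_one hke (Nat.zero_le k)
  have hle := D.pairLattice_zero_le_fracLattice hke
  rw [← range_eq_Ico] at hvw
  exact dvd_mul_of_det2_mul_eq_one (hle hv) (hle hw) hvw

/-- The degree `d_• d_•' ⋯ d_•^{(k−1)}` of the surface defined by the first `k`
characteristic terms divides
`(m₁ m₁'(2) ⋯ m₁^{(k−1)}(2)) · (m₂ m₂'(1) ⋯ m₂^{(k−1)}(1))`. -/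
theorem degree_divides (D : QOData) (k : ℕ) (hk1 : 1 ≤ k) (hke : k ≤ D.e) :
    (∏ l ∈ Finset.range k, D.dd false l) ∣
      (∏ l ∈ Finset.range k, D.m true false l) * (∏ l ∈ Finset.range k, D.m false true l) :=
  degree_divides_general D k hke
end

section
/- Assume e ≥ 2. For all j = 1, …, e−1: λ'_{1,j}(1) = (b₁/m₁)·λ'_{1,j}(2) + b₁·r₁·λ_{1,1}·λ'_{2,j}(1) and λ'_{2,j}(2) = (b₂/m₂)·λ'_{2,j}(1) + b₂·r₂·λ_{2,1}·λ'_{1,j}(2). -/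
/-!
At level `0` every derived sequence is the original one, so the denominators `m_u(i)` are
the reduced denominators of `λ_{u,1}` and do not depend on `i`. Hence the recursion for
`λ'_{i,j}(ĩ)` computes exactly `m_i` times the bracket that `b_i` multiplies in the
recursion for `λ'_{i,j}(i)`.
-/

namespace QOData

variable (D : QOData)

theorem m_zero_eq_den (i u : Bool) : D.m i u 0 = (D.lam0 u 1).den := by
  have hk : 0 ≤ D.e - 1 := Nat.zero_le _
  have hm : (0 : ℤ) < D.m i u 0 := by exact_mod_cast D.m_pos i u 0 hk
  rw [← D.base i, D.lead i u 0 hk]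
  have h := Rat.den_div_eq_of_coprime hm (D.cop i u 0 hk)
  push_cast at h
  exact_mod_cast h.symm

theorem m_zero_eq (i i' u : Bool) : D.m i u 0 = D.m i' u 0 := by
  rw [D.m_zero_eq_den i, D.m_zero_eq_den i']

theorem dd_zero_eq (i i' : Bool) : D.dd i 0 = D.dd i' 0 := by
  simp only [dd, D.m_zero_eq i i']

section FirstStep

variable {j : ℕ} (hj1 : 1 ≤ j) (hj : j ≤ D.e - 1)
include hj1 hj

theorem lam_other_one (i : Bool) :
    D.lam (!i) i 1 j =
      D.m i i 0 * (D.lam0 i (j + 1) - D.lam0 i 1 + D.dd i 0 * D.lam0 i 1) := by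
  have h := D.rec_other (!i) 0 j (by omega) hj1 hj
  rw [Bool.not_not, D.base, D.base] at h
  rw [h, D.m_zero_eq (!i) i, ← dd, D.dd_zero_eq (!i) i]

theorem lam_self_one (i : Bool) :
    D.lam i i 1 j =
      D.b i 0 * (D.lam0 i (j + 1) - D.lam0 i 1 + D.dd i 0 * D.lam0 i 1) +
        D.b i 0 * D.r i 0 * D.lam0 i 1 * D.lam i (!i) 1 j := by
  rw [D.rec_self i 0 j (by omega) hj1 hj, D.base, D.base]
  rfl

theorem lam_self_one_eq_cross (i : Bool) :
    D.lam i i 1 j =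
      (D.b i 0 / D.m i i 0) * D.lam (!i) i 1 j +
        D.b i 0 * D.r i 0 * D.lam0 i 1 * D.lam i (!i) 1 j := by
  have hm : (D.m i i 0 : ℚ) ≠ 0 := by
    have := D.m_pos i i 0 (Nat.zero_le _)
    positivity
  rw [D.lam_self_one hj1 hj, D.lam_other_one hj1 hj, ← mul_assoc, div_mul_cancel₀ _ hm]

end FirstStep

end QOData

theorem first_cross_relations_general (D : QOData)
    (j : ℕ) (hj1 : 1 ≤ j) (hj : j ≤ D.e - 1) :
    D.lam false false 1 j =
      ((D.b false 0 : ℚ) / (D.m false false 0 : ℚ)) * D.lam true false 1 j +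
        (D.b false 0 : ℚ) * (D.r false 0 : ℚ) * D.lam0 false 1 * D.lam false true 1 j ∧
    D.lam true true 1 j =
      ((D.b true 0 : ℚ) / (D.m true true 0 : ℚ)) * D.lam false true 1 j +
        (D.b true 0 : ℚ) * (D.r true 0 : ℚ) * D.lam0 true 1 * D.lam true false 1 j :=
  ⟨D.lam_self_one_eq_cross hj1 hj false, D.lam_self_one_eq_cross hj1 hj true⟩

/-- For all `j = 1,…,e−1`:
`λ'_{1,j}(1) = (b₁/m₁)·λ'_{1,j}(2) + b₁·r₁·λ_{1,1}·λ'_{2,j}(1)` and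
`λ'_{2,j}(2) = (b₂/m₂)·λ'_{2,j}(1) + b₂·r₂·λ_{2,1}·λ'_{1,j}(2)`. -/
theorem first_cross_relations (D : QOData) (he2 : 2 ≤ D.e)
    (j : ℕ) (hj1 : 1 ≤ j) (hj : j ≤ D.e - 1) :
    D.lam false false 1 j =
      ((D.b false 0 : ℚ) / (D.m false false 0 : ℚ)) * D.lam true false 1 j +
        (D.b false 0 : ℚ) * (D.r false 0 : ℚ) * D.lam0 false 1 * D.lam false true 1 j ∧
    D.lam true true 1 j =
      ((D.b true 0 : ℚ) / (D.m true true 0 : ℚ)) * D.lam false true 1 j +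
        (D.b true 0 : ℚ) * (D.r true 0 : ℚ) * D.lam0 true 1 * D.lam true false 1 j :=
  first_cross_relations_general D j hj1 hj
end

section
/- For every k = 0, …, e−1 one has c_•^{(k)}(1) = c_•^{(k)}(2); that is, the greatest common divisors of the numerators of the leading exponents of the k-th derived surfaces agree for the two choices of recursion. -/
/-!
Write `V_k(i)` for the `ℤ`-span of the two exponent sequences `j ↦ λ^{(k)}_{1,j}(i)` and
`j ↦ λ^{(k)}_{2,j}(i)`. The recursion expresses the sequences of level `k + 1` as integral
combinations of the shifted sequences `λ_{j+1} − λ_1 + d_• λ_1`, and the coefficient vectors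
that occur span exactly the pairs `(a₁, a₂) ∈ ℤ²` with `a₁ λ_{1,1} + a₂ λ_{2,1} ∈ ℤ`. Hence
`V_{k+1}(i)` is the shift of the elements of `V_k(i)` with integral first term, a description
in which `i` enters only through `d_•^{(k)}(i)`. Both `d_•` and `c_•` are determined by the
`ℤ`-span of the two leading exponents (as the lcm of the denominators and the gcd of the
numerators), which is the image of `V_k(i)` under evaluation at `j = 1`. So by induction
`V_k(1) = V_k(2)` for all `k`, and with it `c_•^{(k)}(1) = c_•^{(k)}(2)`.
-/

open Submodule

namespace Rat

theorem mem_one_iff_exists_int {q : ℚ} : q ∈ (1 : Submodule ℤ ℚ) ↔ ∃ z : ℤ, (z : ℚ) = q := by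
  simp [Submodule.mem_one]

theorem den_dvd_iff_mul_mem_one (q : ℚ) (N : ℤ) :
    (q.den : ℤ) ∣ N ↔ (N : ℚ) * q ∈ (1 : Submodule ℤ ℚ) := by
  rw [mem_one_iff_exists_int]
  constructor
  · rintro ⟨t, rfl⟩
    exact ⟨t * q.num, by push_cast; rw [← q.mul_den_eq_num]; ring⟩
  · rintro ⟨z, hz⟩
    refine q.isCoprime_num_den.symm.dvd_of_dvd_mul_right ⟨z, ?_⟩
    have h : (N : ℚ) * q.num = q.den * z := by
      linear_combination (-(N : ℚ)) * q.mul_den_eq_num - (q.den : ℚ) * hz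
    exact_mod_cast h

theorem den_dvd_lcm_of_mem_span {x y q : ℚ} (hq : q ∈ span ℤ {x, y}) :
    q.den ∣ Nat.lcm x.den y.den := by
  set L := Nat.lcm x.den y.den
  have hx : ((L : ℤ) : ℚ) * x ∈ (1 : Submodule ℤ ℚ) :=
    (den_dvd_iff_mul_mem_one x L).mp (Int.natCast_dvd_natCast.mpr (Nat.dvd_lcm_left _ _))
  have hy : ((L : ℤ) : ℚ) * y ∈ (1 : Submodule ℤ ℚ) :=
    (den_dvd_iff_mul_mem_one y L).mp (Int.natCast_dvd_natCast.mpr (Nat.dvd_lcm_right _ _))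
  obtain ⟨a, b, rfl⟩ := mem_span_pair.mp hq
  have := (den_dvd_iff_mul_mem_one (a • x + b • y) L).mpr (by
    simpa only [zsmul_eq_mul, mul_add, mul_left_comm] using
      add_mem (smul_mem _ a hx) (smul_mem _ b hy))
  exact_mod_cast this

theorem gcd_num_dvd_num_of_mem_span {x y q : ℚ} (hq : q ∈ span ℤ {x, y}) :
    (Int.gcd x.num y.num : ℤ) ∣ q.num := by
  obtain ⟨a, b, rfl⟩ := mem_span_pair.mp hq
  set H : ℤ := (Int.gcd x.num y.num : ℤ)
  have hx : H ∣ x.num := Int.gcd_dvd_left _ _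
  have hy : H ∣ y.num := Int.gcd_dvd_right _ _
  have hcop : IsCoprime H (x.den * y.den) :=
    (x.isCoprime_num_den.of_isCoprime_of_dvd_left hx).mul_right
      (y.isCoprime_num_den.of_isCoprime_of_dvd_left hy)
  have key : (a • x + b • y).num * (x.den * y.den) =
      (a • x + b • y).den * (a * x.num * y.den + b * y.num * x.den) := by
    have h : ((a • x + b • y).num : ℚ) * (x.den * y.den) =
        (a • x + b • y).den * (a * x.num * y.den + b * y.num * x.den) := by
      rw [← Rat.mul_den_eq_num, ← x.mul_den_eq_num, ← y.mul_den_eq_num]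
      simp only [zsmul_eq_mul]
      ring
    exact_mod_cast h
  refine hcop.dvd_of_dvd_mul_right ?_
  rw [key]
  exact dvd_mul_of_dvd_right (dvd_add ((hx.mul_left a).mul_right _) ((hy.mul_left b).mul_right _)) _

theorem lcm_den_eq_of_span_eq {x₁ x₂ y₁ y₂ : ℚ} (h : span ℤ {x₁, x₂} = span ℤ {y₁, y₂}) :
    Nat.lcm x₁.den x₂.den = Nat.lcm y₁.den y₂.den :=
  Nat.dvd_antisymm
    (Nat.lcm_dvd (den_dvd_lcm_of_mem_span (h ▸ subset_span (by simp)))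
      (den_dvd_lcm_of_mem_span (h ▸ subset_span (by simp))))
    (Nat.lcm_dvd (den_dvd_lcm_of_mem_span (h.symm ▸ subset_span (by simp)))
      (den_dvd_lcm_of_mem_span (h.symm ▸ subset_span (by simp))))

theorem gcd_num_eq_of_span_eq {x₁ x₂ y₁ y₂ : ℚ} (h : span ℤ {x₁, x₂} = span ℤ {y₁, y₂}) :
    Int.gcd x₁.num x₂.num = Int.gcd y₁.num y₂.num :=
  Nat.dvd_antisymm
    (Int.dvd_gcd (gcd_num_dvd_num_of_mem_span (h ▸ subset_span (by simp)))
      (gcd_num_dvd_num_of_mem_span (h ▸ subset_span (by simp))))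
    (Int.dvd_gcd (gcd_num_dvd_num_of_mem_span (h.symm ▸ subset_span (by simp)))
      (gcd_num_dvd_num_of_mem_span (h.symm ▸ subset_span (by simp))))

theorem exists_coeffs_of_mul_add_mul_mem_one {x y : ℚ} {b c a₁ a₂ : ℤ}
    (hb : b * y.den = Nat.lcm x.den y.den) (hbc : b * x + c * y ∈ (1 : Submodule ℤ ℚ))
    (ha : a₁ * x + a₂ * y ∈ (1 : Submodule ℤ ℚ)) :
    ∃ p q : ℤ, a₁ = p * b ∧ a₂ = p * c + q * y.den := by
  have hyden : (y.den : ℤ) ≠ 0 := by exact_mod_cast y.den_nz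
  have hnum : ((y.den : ℤ) : ℚ) * y ∈ (1 : Submodule ℤ ℚ) :=
    (den_dvd_iff_mul_mem_one y _).mp dvd_rfl
  have hx : (x.den : ℤ) ∣ a₁ * y.den := by
    rw [den_dvd_iff_mul_mem_one]
    have := sub_mem (smul_mem _ (y.den : ℤ) ha) (smul_mem _ a₂ hnum)
    convert this using 1
    simp only [zsmul_eq_mul]; push_cast; ring
  obtain ⟨p, hp⟩ : b ∣ a₁ := by
    have := lcm_dvd hx (dvd_mul_left (y.den : ℤ) a₁)
    rw [← Int.coe_lcm, Int.lcm_natCast_natCast, ← hb] at this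
    exact (mul_dvd_mul_iff_right hyden).mp this
  obtain ⟨q, hq⟩ : (y.den : ℤ) ∣ a₂ - p * c := by
    rw [den_dvd_iff_mul_mem_one]
    have := sub_mem ha (smul_mem _ p hbc)
    convert this using 1
    rw [hp, zsmul_eq_mul]; push_cast; ring
  exact ⟨p, q, by rw [hp, mul_comm], by linear_combination hq⟩

end Rat

theorem span_pair_inf_comap_one {A : Type*} [AddCommGroup A] (ev : A →ₗ[ℤ] ℚ) {f g : A}
    {b c : ℤ} (hb : b * (ev g).den = Nat.lcm (ev f).den (ev g).den)
    (hbc : b * ev f + c * ev g ∈ (1 : Submodule ℤ ℚ)) :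
    span ℤ {f, g} ⊓ (1 : Submodule ℤ ℚ).comap ev =
      span ℤ {b • f + c • g, ((ev g).den : ℤ) • g} := by
  apply le_antisymm
  · intro φ hφ
    obtain ⟨hφ, hφ1⟩ := mem_inf.mp hφ
    obtain ⟨a₁, a₂, rfl⟩ := mem_span_pair.mp hφ
    have ha : a₁ * ev f + a₂ * ev g ∈ (1 : Submodule ℤ ℚ) := by
      simpa only [mem_comap, map_add, map_zsmul, zsmul_eq_mul] using hφ1
    obtain ⟨p, q, rfl, rfl⟩ := Rat.exists_coeffs_of_mul_add_mul_mem_one hb hbc ha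
    exact mem_span_pair.mpr ⟨p, q, by simp only [smul_add, smul_smul, add_smul]; abel⟩
  · rw [span_le]
    rintro _ (rfl | rfl)
    · refine ⟨add_mem (smul_mem _ _ (subset_span (by simp)))
        (smul_mem _ _ (subset_span (by simp))), ?_⟩
      simpa only [SetLike.mem_coe, mem_comap, map_add, map_zsmul, zsmul_eq_mul] using hbc
    · refine ⟨smul_mem _ _ (subset_span (by simp)), ?_⟩
      simp only [SetLike.mem_coe, mem_comap, map_zsmul, zsmul_eq_mul]
      exact (Rat.den_dvd_iff_mul_mem_one _ _).mp dvd_rfl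

def exponentShift (N : ℕ) (d : ℚ) : (ℕ → ℚ) →ₗ[ℤ] (ℕ → ℚ) where
  toFun φ j := if 1 ≤ j ∧ j ≤ N then φ (j + 1) - φ 1 + d * φ 1 else 0
  map_add' φ ψ := by
    ext j
    simp only [Pi.add_apply]
    split_ifs <;> ring
  map_smul' z φ := by
    ext j
    simp only [Pi.smul_apply, zsmul_eq_mul, eq_intCast, Int.cast_id]
    split_ifs <;> ring

theorem exponentShift_apply (N : ℕ) (d : ℚ) (φ : ℕ → ℚ) (j : ℕ) :
    exponentShift N d φ j = if 1 ≤ j ∧ j ≤ N then φ (j + 1) - φ 1 + d * φ 1 else 0 :=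
  rfl

namespace QOData

variable (D : QOData)

/-- Outside `1 ≤ j ≤ e − k` the values of `lam` are unconstrained, so they are replaced by zero. -/
def row (i u : Bool) (k : ℕ) : ℕ → ℚ :=
  fun j => if 1 ≤ j ∧ j ≤ D.e - k then D.lam i u k j else 0

def rowSpan (i : Bool) (k : ℕ) : Submodule ℤ (ℕ → ℚ) :=
  span ℤ {D.row i false k, D.row i true k}

/-- `b_i^{(k)} r_i^{(k)} λ^{(k)}_{i,1}(i) m_ĩ^{(k)}(i)`, the coefficient of the `ĩ`-th shifted
sequence in the recursion for `λ^{(k+1)}_{i,j}(i)`, written as an integer. -/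
def crossCoeff (i : Bool) (k : ℕ) : ℤ :=
  D.r i k * D.n i i k * (D.dd i k / D.m i i k : ℕ)

variable {D}

theorem row_of_mem {i u : Bool} {k j : ℕ} (h₁ : 1 ≤ j) (h₂ : j ≤ D.e - k) :
    D.row i u k j = D.lam i u k j :=
  if_pos ⟨h₁, h₂⟩

theorem row_apply_one {i u : Bool} {k : ℕ} (hk : k ≤ D.e - 1) :
    D.row i u k 1 = D.lam i u k 1 :=
  row_of_mem le_rfl (by have := D.he; omega)

theorem num_lam_one {i u : Bool} {k : ℕ} (hk : k ≤ D.e - 1) :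
    (D.lam i u k 1).num = D.n i u k := by
  rw [D.lead i u k hk]
  exact_mod_cast Rat.num_div_eq_of_coprime (by exact_mod_cast D.m_pos i u k hk) (D.cop i u k hk)

theorem den_lam_one {i u : Bool} {k : ℕ} (hk : k ≤ D.e - 1) :
    (D.lam i u k 1).den = D.m i u k := by
  rw [D.lead i u k hk]
  exact_mod_cast Rat.den_div_eq_of_coprime (by exact_mod_cast D.m_pos i u k hk) (D.cop i u k hk)

theorem m_dvd_dd (i u : Bool) (k : ℕ) : D.m i u k ∣ D.dd i k := by
  cases u
  · exact Nat.dvd_lcm_left _ _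
  · exact Nat.dvd_lcm_right _ _

theorem b_mul_m (i : Bool) (k : ℕ) : D.b i k * D.m i (!i) k = D.dd i k :=
  Nat.div_mul_cancel (m_dvd_dd _ _ _)

theorem m_ne_zero {i u : Bool} {k : ℕ} (hk : k ≤ D.e - 1) : (D.m i u k : ℚ) ≠ 0 := by
  have := D.m_pos i u k hk
  positivity

theorem crossCoeff_eq {i : Bool} {k : ℕ} (hk : k ≤ D.e - 1) :
    (D.crossCoeff i k : ℚ) = D.b i k * D.r i k * D.lam i i k 1 * D.m i (!i) k := by
  have hb : (D.b i k : ℚ) * D.m i (!i) k = D.dd i k := by exact_mod_cast b_mul_m i k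
  have hq : ((D.dd i k / D.m i i k : ℕ) : ℚ) * D.m i i k = D.dd i k := by
    exact_mod_cast Nat.div_mul_cancel (m_dvd_dd i i k)
  have hm := m_ne_zero (D := D) (i := i) (u := i) hk
  rw [crossCoeff, D.lead i i k hk]
  simp only [Int.cast_mul, Int.cast_natCast]
  field_simp
  linear_combination (D.r i k : ℚ) * D.n i i k * (hq - hb)

theorem lead_combination_mem_one {i : Bool} {k : ℕ} (hk : k ≤ D.e - 1) :
    (D.b i k : ℤ) * D.lam i i k 1 + D.crossCoeff i k * D.lam i (!i) k 1 ∈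
      (1 : Submodule ℤ ℚ) := by
  rw [Rat.mem_one_iff_exists_int]
  refine ⟨(D.dd i k / D.m i i k : ℕ) * D.n i i k * D.s i k, ?_⟩
  have hm := m_ne_zero (D := D) (i := i) (u := i) hk
  have hm' := m_ne_zero (D := D) (i := i) (u := !i) hk
  have hq : ((D.dd i k / D.m i i k : ℕ) : ℚ) * D.m i i k = D.dd i k := by
    exact_mod_cast Nat.div_mul_cancel (m_dvd_dd i i k)
  have hb : (D.b i k : ℚ) * D.m i (!i) k = D.dd i k := by exact_mod_cast b_mul_m i k
  have hdet : (D.m i (!i) k : ℚ) * D.s i k - D.n i (!i) k * D.r i k = 1 := by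
    exact_mod_cast D.rs_det i k hk
  rw [crossCoeff_eq hk, D.lead i i k hk, D.lead i (!i) k hk]
  simp only [Int.cast_mul, Int.cast_natCast]
  field_simp
  linear_combination (D.n i i k : ℚ) * (D.b i k * hdet - D.s i k * hb + D.s i k * hq)

theorem row_succ_other (i : Bool) (k : ℕ) :
    D.row i (!i) (k + 1) =
      (D.m i (!i) k : ℤ) • exponentShift (D.e - (k + 1)) (D.dd i k) (D.row i (!i) k) := by
  ext j
  simp only [Pi.smul_apply, exponentShift_apply]
  by_cases hj : 1 ≤ j ∧ j ≤ D.e - (k + 1)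
  · simp only [if_pos hj, row_of_mem (by omega : 1 ≤ j + 1) (by omega : j + 1 ≤ D.e - k),
      row_of_mem le_rfl (by omega : 1 ≤ D.e - k), row_of_mem hj.1 hj.2, zsmul_eq_mul,
      Int.cast_natCast]
    exact D.rec_other i k j (by omega) hj.1 hj.2
  · simp [row, hj]

theorem row_succ_self (i : Bool) (k : ℕ) :
    D.row i i (k + 1) =
      (D.b i k : ℤ) • exponentShift (D.e - (k + 1)) (D.dd i k) (D.row i i k) +
        D.crossCoeff i k • exponentShift (D.e - (k + 1)) (D.dd i k) (D.row i (!i) k) := by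
  ext j
  simp only [Pi.add_apply, Pi.smul_apply, exponentShift_apply]
  by_cases hj : 1 ≤ j ∧ j ≤ D.e - (k + 1)
  · have hk : k + 1 ≤ D.e - 1 := by omega
    simp only [if_pos hj, row_of_mem (by omega : 1 ≤ j + 1) (by omega : j + 1 ≤ D.e - k),
      row_of_mem le_rfl (by omega : 1 ≤ D.e - k), row_of_mem hj.1 hj.2, zsmul_eq_mul,
      Int.cast_natCast]
    rw [D.rec_self i k j hk hj.1 hj.2, D.rec_other i k j hk hj.1 hj.2, crossCoeff_eq (by omega)]
    simp only [dd, b]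
    ring
  · simp [row, hj]

theorem rowSpan_eq_span_self_other (i : Bool) (k : ℕ) :
    D.rowSpan i k = span ℤ {D.row i i k, D.row i (!i) k} := by
  cases i
  · rfl
  · rw [rowSpan, Set.pair_comm]
    rfl

theorem rowSpan_succ {i : Bool} {k : ℕ} (hk : k ≤ D.e - 1) :
    D.rowSpan i (k + 1) =
      (D.rowSpan i k ⊓ (1 : Submodule ℤ ℚ).comap (LinearMap.proj 1)).map
        (exponentShift (D.e - (k + 1)) (D.dd i k)) := by
  have hden (u : Bool) : (D.row i u k 1).den = D.m i u k := by
    rw [row_apply_one hk, den_lam_one hk]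
  have hb : (D.b i k : ℤ) * (D.row i (!i) k 1).den =
      Nat.lcm (D.row i i k 1).den (D.row i (!i) k 1).den := by
    rw [hden, hden]
    exact_mod_cast (b_mul_m i k).trans (by cases i <;> simp [dd, Nat.lcm_comm])
  have hbc := lead_combination_mem_one (D := D) (i := i) hk
  rw [← row_apply_one hk, ← row_apply_one (u := !i) hk] at hbc
  have key := span_pair_inf_comap_one (LinearMap.proj (R := ℤ) (φ := fun _ : ℕ => ℚ) 1)
    (f := D.row i i k) (g := D.row i (!i) k) hb hbc
  rw [rowSpan_eq_span_self_other, rowSpan_eq_span_self_other, key, map_span, Set.image_pair,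
    map_add, map_zsmul, map_zsmul, map_zsmul, LinearMap.proj_apply, hden, row_succ_self,
    row_succ_other]

theorem map_proj_rowSpan {i : Bool} {k : ℕ} (hk : k ≤ D.e - 1) :
    (D.rowSpan i k).map (LinearMap.proj 1) = span ℤ {D.lam i false k 1, D.lam i true k 1} := by
  rw [rowSpan, map_span, Set.image_pair, LinearMap.proj_apply, LinearMap.proj_apply,
    row_apply_one hk, row_apply_one hk]

theorem rowSpan_zero : D.rowSpan false 0 = D.rowSpan true 0 := by
  have h (u : Bool) : D.row false u 0 = D.row true u 0 := by
    ext j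
    simp only [row, D.base]
  rw [rowSpan, rowSpan, h, h]

theorem leadSpan_eq_of_rowSpan_eq {k : ℕ} (hk : k ≤ D.e - 1)
    (h : D.rowSpan false k = D.rowSpan true k) :
    span ℤ {D.lam false false k 1, D.lam false true k 1} =
      span ℤ {D.lam true false k 1, D.lam true true k 1} := by
  rw [← map_proj_rowSpan hk, ← map_proj_rowSpan hk, h]

theorem rowSpan_false_eq_true {k : ℕ} (hk : k ≤ D.e - 1) :
    D.rowSpan false k = D.rowSpan true k := by
  induction k with
  | zero => exact rowSpan_zero
  | succ k ih =>
    have hk' : k ≤ D.e - 1 := by omega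
    have ih := ih hk'
    have hdd : D.dd false k = D.dd true k := by
      simpa only [dd, den_lam_one hk'] using
        Rat.lcm_den_eq_of_span_eq (leadSpan_eq_of_rowSpan_eq hk' ih)
    rw [rowSpan_succ hk', rowSpan_succ hk', ih, hdd]

end QOData

/-- For every `k = 0,…,e−1`: `c_•^{(k)}(1) = c_•^{(k)}(2)`. -/
theorem c_eq (D : QOData) (k : ℕ) (hk : k ≤ D.e - 1) :
    D.c false k = D.c true k := by
  simpa only [QOData.c, QOData.num_lam_one hk] using
    Rat.gcd_num_eq_of_span_eq (D.leadSpan_eq_of_rowSpan_eq hk (D.rowSpan_false_eq_true hk))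
end
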